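/- (Rate bound, Eq. (F)) Let t ↦ ρ_t be a differentiable family of nonzero Hermitian positive semidefinite d×d matrices satisfying ρ̇_t = 𝓛_t(ρ_t) for continuous linear maps 𝓛_t on the matrix space with the Hilbert–Schmidt inner product, and let ρ̃_t := ρ_t / ‖ρ_t‖_HS be the normalized states. Then for every t, | d/dt ( tr(ρ̃_0 ρ̃_t) )² | ≤ 2 Δ𝓛_t, where (Δ𝓛_t)² := ‖𝓛_t ρ̃_t‖²_HS − |⟨ρ̃_t, 𝓛_t ρ̃_t⟩|². -/

import Mathlib

open Matrix
open scoped ComplexOrder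

noncomputable section

/-- A density matrix: Hermitian, positive semidefinite, trace one. -/
def IsDensityMatrix {d : ℕ} (ρ : Matrix (Fin d) (Fin d) ℂ) : Prop :=
  ρ.IsHermitian ∧ ρ.PosSemidef ∧ ρ.trace = 1

/-- The real part `(ρ + ρᵀ)/2` of a matrix. -/
def reM {d : ℕ} (ρ : Matrix (Fin d) (Fin d) ℂ) : Matrix (Fin d) (Fin d) ℂ :=
  (2⁻¹ : ℂ) • (ρ + ρᵀ)

/-- The imaginary part `(ρ - ρᵀ)/(2i)` of a matrix. -/
def imM {d : ℕ} (ρ : Matrix (Fin d) (Fin d) ℂ) : Matrix (Fin d) (Fin d) ℂ :=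
  (2 * Complex.I)⁻¹ • (ρ - ρᵀ)

/-- The Hilbert–Schmidt norm `√(tr (Aᴴ A))`. -/
def hsNorm {d : ℕ} (A : Matrix (Fin d) (Fin d) ℂ) : ℝ :=
  Real.sqrt ((Aᴴ * A).trace.re)

/-- The old Mathlib `Matrix.PosSemidef.sqrt` (removed upstream), with its original definition. -/
def Matrix.PosSemidef.sqrt {d : ℕ} {A : Matrix (Fin d) (Fin d) ℂ} (hA : A.PosSemidef) :
    Matrix (Fin d) (Fin d) ℂ :=
  (hA.1.eigenvectorUnitary : Matrix (Fin d) (Fin d) ℂ) *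
    diagonal ((↑) ∘ (Real.sqrt ·) ∘ hA.1.eigenvalues) *
    (star hA.1.eigenvectorUnitary : Matrix (Fin d) (Fin d) ℂ)

/-- The trace norm `tr √(Aᴴ A)`. -/
def traceNorm {d : ℕ} (A : Matrix (Fin d) (Fin d) ℂ) : ℝ :=
  ((Matrix.posSemidef_conjTranspose_mul_self A).sqrt.trace).re

/-- Matrix logarithm via the continuous functional calculus (on Hermitian matrices). -/
def matLog {d : ℕ} (A : Matrix (Fin d) (Fin d) ℂ) : Matrix (Fin d) (Fin d) ℂ :=
  cfc Real.log A

open scoped Classical in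
/-- The positive semidefinite square root of a positive semidefinite matrix
(junk value `0` otherwise). -/
def msqrt {d : ℕ} (A : Matrix (Fin d) (Fin d) ℂ) : Matrix (Fin d) (Fin d) ℂ :=
  if h : A.PosSemidef then h.sqrt else 0

/-- The von Neumann entropy `S(ρ) = -tr(ρ log ρ)`. -/
def vnEntropy {d : ℕ} (ρ : Matrix (Fin d) (Fin d) ℂ) : ℝ :=
  -((ρ * matLog ρ).trace.re)

/-- The relative entropy of imaginarity `M_r(ρ) = S(Re ρ) - S(ρ)`. -/
def Mr {d : ℕ} (ρ : Matrix (Fin d) (Fin d) ℂ) : ℝ :=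
  vnEntropy (reM ρ) - vnEntropy ρ

/-- The root fidelity `tr √(√ρ σ √ρ)`. -/
def rootFid {d : ℕ} (ρ σ : Matrix (Fin d) (Fin d) ℂ) : ℝ :=
  ((msqrt (msqrt ρ * σ * msqrt ρ)).trace).re

/-- The geometric imaginarity `M_g(ρ) = (1 - √F(ρ, ρᵀ))/2`. -/
def Mg {d : ℕ} (ρ : Matrix (Fin d) (Fin d) ℂ) : ℝ :=
  (1 - rootFid ρ ρᵀ) / 2

/-- The Hilbert–Schmidt inner product `⟨A, B⟩ = tr(Aᴴ B)`. -/
def hsInner {d : ℕ} (A B : Matrix (Fin d) (Fin d) ℂ) : ℂ :=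
  (Aᴴ * B).trace

/-- The operator norm of a map on matrices induced by the Hilbert–Schmidt norm. -/
def opNormHS {d : ℕ} (L : Matrix (Fin d) (Fin d) ℂ → Matrix (Fin d) (Fin d) ℂ) : ℝ :=
  sSup {x : ℝ | ∃ ψ, hsNorm ψ = 1 ∧ x = hsNorm (L ψ)}

/-- The Liouville-space normalized vector `ρ̃ = ρ / ‖ρ‖_HS`. -/
def hsNormalize {d : ℕ} (A : Matrix (Fin d) (Fin d) ℂ) : Matrix (Fin d) (Fin d) ℂ :=
  ((hsNorm A : ℂ))⁻¹ • A

/-- The fluctuation `Δ𝓛 = √(‖𝓛ψ‖² - |⟨ψ, 𝓛ψ⟩|²)` of a superoperator at a unit vector. -/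
def fluct {d : ℕ} (L : Matrix (Fin d) (Fin d) ℂ → Matrix (Fin d) (Fin d) ℂ)
    (ψ : Matrix (Fin d) (Fin d) ℂ) : ℝ :=
  Real.sqrt ((hsNorm (L ψ)) ^ 2 - ‖hsInner ψ (L ψ)‖ ^ 2)

/-
In Liouville space the normalized states `ψₛ = ρₛ / ‖ρₛ‖` are unit vectors, and
`tr (ψ₀ ψₛ) = ⟨ψ₀, ψₛ⟩` because `ψ₀` is Hermitian. The velocity of `ψ` is the component of `𝓛ₜψₜ`
orthogonal to `ψₜ`, of norm `√(‖𝓛ₜψₜ‖² - (Re ⟨ψₜ, 𝓛ₜψₜ⟩)²)`, so Cauchy–Schwarz bounds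
`d/dt ⟨ψ₀, ψₜ⟩² = 2 ⟨ψ₀, ψₜ⟩ ⟨ψ₀, ψ̇ₜ⟩` by twice that norm. As `ρₜ` and `ρ̇ₜ` are Hermitian,
`⟨ψₜ, 𝓛ₜψₜ⟩` is real, so the norm is exactly `Δ𝓛ₜ`.
-/

open scoped InnerProductSpace RealInnerProductSpace

section UnitVector

variable {F : Type*} [NormedAddCommGroup F] [InnerProductSpace ℝ F]

theorem norm_sub_inner_smul_sq {u : F} (hu : ‖u‖ = 1) (v : F) :
    ‖v - ⟪u, v⟫ • u‖ ^ 2 = ‖v‖ ^ 2 - ⟪u, v⟫ ^ 2 := by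
  rw [norm_sub_sq_real, real_inner_smul_right, norm_smul, hu, mul_one, Real.norm_eq_abs, sq_abs,
    real_inner_comm]
  ring

theorem abs_inner_mul_inner_sub_inner_smul_le {u₀ u : F} (hu₀ : ‖u₀‖ = 1) (hu : ‖u‖ = 1)
    (v : F) : |⟪u₀, u⟫ * ⟪u₀, v - ⟪u, v⟫ • u⟫| ≤ √(‖v‖ ^ 2 - ⟪u, v⟫ ^ 2) := by
  rw [← norm_sub_inner_smul_sq hu, Real.sqrt_sq (norm_nonneg _), abs_mul]
  have h₁ : |⟪u₀, u⟫| ≤ 1 := by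
    simpa [hu₀, hu] using abs_real_inner_le_norm u₀ u
  have h₂ : |⟪u₀, v - ⟪u, v⟫ • u⟫| ≤ ‖v - ⟪u, v⟫ • u‖ := by
    simpa [hu₀] using abs_real_inner_le_norm u₀ (v - ⟪u, v⟫ • u)
  exact (mul_le_of_le_one_left (abs_nonneg _) h₁).trans h₂

theorem HasDerivAt.norm_of_ne_zero {x : ℝ → F} {x' : F} {t : ℝ} (hx : HasDerivAt x x' t)
    (h0 : x t ≠ 0) : HasDerivAt (fun s => ‖x s‖) (⟪x t, x'⟫ / ‖x t‖) t := by
  have := hx.norm_sq.sqrt (by positivity)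
  simp only [Real.sqrt_sq (norm_nonneg _)] at this
  convert this using 1
  field_simp

theorem HasDerivAt.inv_norm_smul {x : ℝ → F} {x' : F} {t : ℝ} (hx : HasDerivAt x x' t)
    (h0 : x t ≠ 0) :
    HasDerivAt (fun s => ‖x s‖⁻¹ • x s)
      (‖x t‖⁻¹ • x' - ⟪‖x t‖⁻¹ • x t, ‖x t‖⁻¹ • x'⟫ • ‖x t‖⁻¹ • x t) t := by
  have hn : ‖x t‖ ≠ 0 := norm_ne_zero_iff.mpr h0
  convert ((hx.norm_of_ne_zero h0).inv hn).smul hx using 1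
  · rfl
  simp only [Pi.inv_apply, real_inner_smul_left, real_inner_smul_right, smul_smul,
    sub_eq_add_neg, ← neg_smul]
  congr 2
  field_simp

theorem abs_deriv_inner_inv_norm_smul_sq_le {u₀ : F} (hu₀ : ‖u₀‖ = 1) {x : ℝ → F} {x' : F}
    {t D : ℝ} (hx : HasDerivAt x x' t) (h0 : x t ≠ 0)
    (hD : HasDerivAt (fun s => ⟪u₀, ‖x s‖⁻¹ • x s⟫ ^ 2) D t) :
    |D| ≤ 2 * √(‖‖x t‖⁻¹ • x'‖ ^ 2 - ⟪‖x t‖⁻¹ • x t, ‖x t‖⁻¹ • x'⟫ ^ 2) := by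
  have hu : ‖‖x t‖⁻¹ • x t‖ = 1 := norm_smul_inv_norm h0
  rw [hD.unique (((hasDerivAt_const t u₀).inner ℝ (hx.inv_norm_smul h0)).pow 2)]
  simp only [inner_zero_left, add_zero, Nat.cast_ofNat, Nat.add_one_sub_one, pow_one, mul_assoc,
    abs_mul (2 : ℝ), abs_two]
  gcongr
  exact abs_inner_mul_inner_sub_inner_smul_le hu₀ hu (‖x t‖⁻¹ • x')

end UnitVector

namespace Matrix

variable {𝕜 m n : Type*} [RCLike 𝕜]

def liouvilleVec (A : Matrix m n 𝕜) : EuclideanSpace 𝕜 (n × m) :=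
  WithLp.toLp 2 A.vec

@[simp]
theorem liouvilleVec_eq_zero_iff {A : Matrix m n 𝕜} : liouvilleVec A = 0 ↔ A = 0 := by
  simp [liouvilleVec]

theorem liouvilleVec_real_smul (r : ℝ) (A : Matrix m n 𝕜) :
    liouvilleVec (r • A) = r • liouvilleVec A :=
  rfl

theorem IsHermitian.of_hasDerivAt {ρ : ℝ → Matrix n n 𝕜} {ρ' : Matrix n n 𝕜} {t : ℝ}
    (hρ : ∀ s, (ρ s).IsHermitian) (h : ∀ i j, HasDerivAt (fun s => ρ s i j) (ρ' i j) t) :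
    ρ'.IsHermitian := by
  ext i j
  refine ((h j i).star).unique ?_
  simpa only [← conjTranspose_apply, (hρ _).eq] using h i j

variable [Fintype m] [Fintype n]

theorem hasDerivAt_liouvilleVec {ρ : ℝ → Matrix m n 𝕜} {ρ' : Matrix m n 𝕜} {t : ℝ}
    (h : ∀ i j, HasDerivAt (fun s => ρ s i j) (ρ' i j) t) :
    HasDerivAt (fun s => liouvilleVec (ρ s)) (liouvilleVec ρ') t := by
  have h' : HasDerivAt (fun s => (ρ s).vec) ρ'.vec t := hasDerivAt_pi.2 fun p => h p.2 p.1
  exact (PiLp.continuousLinearEquiv 2 ℝ (fun _ : n × m => 𝕜)).symm.hasFDerivAt.comp_hasDerivAt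
    t h'

theorem inner_liouvilleVec (A B : Matrix m n 𝕜) :
    ⟪liouvilleVec A, liouvilleVec B⟫_𝕜 = (Aᴴ * B).trace := by
  rw [liouvilleVec, liouvilleVec, EuclideanSpace.inner_toLp_toLp, dotProduct_comm,
    star_vec_dotProduct_vec]

theorem real_inner_liouvilleVec (A B : Matrix m n 𝕜) :
    ⟪liouvilleVec A, liouvilleVec B⟫ = RCLike.re (Aᴴ * B).trace := by
  rw [← inner_liouvilleVec]
  simp only [PiLp.inner_apply, map_sum]
  rfl

theorem norm_liouvilleVec (A : Matrix m n 𝕜) :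
    ‖liouvilleVec A‖ = √(RCLike.re (Aᴴ * A).trace) := by
  rw [norm_eq_sqrt_re_inner (𝕜 := 𝕜), inner_liouvilleVec]

theorem IsHermitian.im_trace_mul {A B : Matrix n n 𝕜} (hA : A.IsHermitian) (hB : B.IsHermitian) :
    RCLike.im (A * B).trace = 0 := by
  rw [← RCLike.conj_eq_iff_im, ← RCLike.star_def, ← trace_conjTranspose, conjTranspose_mul,
    hA.eq, hB.eq, trace_mul_comm]

end Matrix

section Liouville

open Matrix

variable {d : ℕ}

theorem hsNorm_eq_norm_liouvilleVec (A : Matrix (Fin d) (Fin d) ℂ) :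
    hsNorm A = ‖liouvilleVec A‖ := by
  rw [norm_liouvilleVec, RCLike.re_to_complex, hsNorm]

theorem hsNormalize_eq_smul (A : Matrix (Fin d) (Fin d) ℂ) :
    hsNormalize A = (hsNorm A)⁻¹ • A := by
  rw [hsNormalize, ← Complex.ofReal_inv, Complex.coe_smul]

theorem liouvilleVec_hsNormalize (A : Matrix (Fin d) (Fin d) ℂ) :
    liouvilleVec (hsNormalize A) = ‖liouvilleVec A‖⁻¹ • liouvilleVec A := by
  rw [hsNormalize_eq_smul, liouvilleVec_real_smul, hsNorm_eq_norm_liouvilleVec]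

theorem Matrix.IsHermitian.hsNormalize {A : Matrix (Fin d) (Fin d) ℂ} (hA : A.IsHermitian) :
    (hsNormalize A).IsHermitian := by
  rw [hsNormalize_eq_smul]
  exact hA.smul (IsSelfAdjoint.all _)

theorem fluct_eq_of_isHermitian {L : Matrix (Fin d) (Fin d) ℂ → Matrix (Fin d) (Fin d) ℂ}
    {ψ : Matrix (Fin d) (Fin d) ℂ} (hψ : ψ.IsHermitian) (hLψ : (L ψ).IsHermitian) :
    fluct L ψ = √(‖liouvilleVec (L ψ)‖ ^ 2 - ⟪liouvilleVec ψ, liouvilleVec (L ψ)⟫ ^ 2) := by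
  rw [fluct, hsNorm_eq_norm_liouvilleVec, real_inner_liouvilleVec, hsInner,
    RCLike.re_to_complex, ← Complex.abs_re_eq_norm.2 (hψ.eq.symm ▸ hψ.im_trace_mul hLψ), sq_abs]

end Liouville

theorem overlap_rate_bound {d : ℕ}
    (ρ ρ' : ℝ → Matrix (Fin d) (Fin d) ℂ)
    (L : ℝ → Matrix (Fin d) (Fin d) ℂ → Matrix (Fin d) (Fin d) ℂ)
    (hLlin : ∀ t, IsLinearMap ℂ (L t))
    (hne : ∀ t, ρ t ≠ 0)
    (hpsd : ∀ t, (ρ t).PosSemidef)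
    (hderiv : ∀ t, ∀ i j, HasDerivAt (fun s => ρ s i j) (ρ' t i j) t)
    (heq : ∀ t, ρ' t = L t (ρ t)) :
    ∀ t, ∀ D : ℝ,
      HasDerivAt (fun s => (((hsNormalize (ρ 0)) * (hsNormalize (ρ s))).trace.re) ^ 2) D t →
      |D| ≤ 2 * fluct (L t) (hsNormalize (ρ t)) := by
  intro t D hD
  have herm : ∀ s, (ρ s).IsHermitian := fun s => (hpsd s).isHermitian
  set x : ℝ → EuclideanSpace ℂ (Fin d × Fin d) := fun s => liouvilleVec (ρ s)
  have hx0 : ∀ s, x s ≠ 0 := fun s => liouvilleVec_eq_zero_iff.not.2 (hne s)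
  have hL : L t (hsNormalize (ρ t)) = ‖x t‖⁻¹ • ρ' t := by
    rw [hsNormalize, (hLlin t).map_smul, ← heq, hsNorm_eq_norm_liouvilleVec, ← Complex.ofReal_inv,
      Complex.coe_smul]
  have hoverlap : (fun s => (((hsNormalize (ρ 0)) * (hsNormalize (ρ s))).trace.re) ^ 2)
      = fun s => ⟪‖x 0‖⁻¹ • x 0, ‖x s‖⁻¹ • x s⟫ ^ 2 := by
    ext s
    rw [← liouvilleVec_hsNormalize, ← liouvilleVec_hsNormalize, real_inner_liouvilleVec,
      (herm 0).hsNormalize.eq, RCLike.re_to_complex]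
  rw [hoverlap] at hD
  rw [fluct_eq_of_isHermitian (herm t).hsNormalize
      (hL ▸ (IsHermitian.of_hasDerivAt herm (hderiv t)).smul (IsSelfAdjoint.all _)),
    hL, liouvilleVec_real_smul, liouvilleVec_hsNormalize]
  exact abs_deriv_inner_inv_norm_smul_sq_le (norm_smul_inv_norm (hx0 0))
    (hasDerivAt_liouvilleVec (hderiv t)) (hx0 t) hD
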